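/- arXiv:1910.09350 — 7 statements merged into one kernel-verified Lean document; each statement's English description precedes it below -/
import Mathlib

section
/- If $(x_n)$ and $(y_n)$ satisfy $x_{n+3}=\frac{x_n y_{n+1}}{y_{n+2}(A_n+B_n x_n y_{n+1})}$ and $y_{n+3}=\frac{y_n x_{n+1}}{x_{n+2}(C_n+D_n y_n x_{n+1})}$ with all relevant quantities nonzero, then the quantities $U_n = 1/(x_n y_{n+1})$ and $V_n = 1/(x_{n+1} y_n)$ satisfy the linear recurrences $V_{n+2} = A_n U_n + B_n$ and $U_{n+2} = C_n V_n + D_n$. -/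
/-- If `(x_n)` and `(y_n)` satisfy the third-order system, then
`U_n = 1/(x_n y_{n+1})` and `V_n = 1/(x_{n+1} y_n)` satisfy
`V_{n+2} = A_n U_n + B_n` and `U_{n+2} = C_n V_n + D_n`. -/
theorem stmt0 (A B C D x y U V : ℕ → ℝ)
    (hx : ∀ n, x n ≠ 0) (hy : ∀ n, y n ≠ 0)
    (hA : ∀ n, A n + B n * (x n * y (n + 1)) ≠ 0)
    (hC : ∀ n, C n + D n * (y n * x (n + 1)) ≠ 0)
    (hrecx : ∀ n, x (n + 3) = x n * y (n + 1) / (y (n + 2) * (A n + B n * (x n * y (n + 1)))))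
    (hrecy : ∀ n, y (n + 3) = y n * x (n + 1) / (x (n + 2) * (C n + D n * (y n * x (n + 1)))))
    (hU : ∀ n, U n = 1 / (x n * y (n + 1)))
    (hV : ∀ n, V n = 1 / (x (n + 1) * y n)) :
    ∀ n, V (n + 2) = A n * U n + B n ∧ U (n + 2) = C n * V n + D n := by
  intro n
  constructor
  · rw [hV, hU, show n + 2 + 1 = n + 3 from rfl, hrecx, div_mul_eq_mul_div, one_div_div]
    field_simp [hx n, hy (n + 1), hy (n + 2)]
  · rw [hU, hV, show n + 2 + 1 = n + 3 from rfl, hrecy, mul_div_assoc', one_div_div]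
    field_simp [hy n, hx (n + 1), hx (n + 2)]
end

section
/- Consider the system $x_{n+1} = \frac{x_{n-2} y_{n-1}}{y_n (1 + x_{n-2} y_{n-1})}$, $y_{n+1} = \frac{y_{n-2} x_{n-1}}{x_n (1 + y_{n-2} x_{n-1})}$ (the case $a=b=c=d=1$). Then for all $n \ge 1$, $x_{4n-2} = \frac{x_0^n y_0^n}{y_{-2}^n x_{-2}^{n-1}} \prod_{s=0}^{n-1} \frac{1 + 2s\, x_{-2} y_{-1}}{1 + 2s\, x_0 y_{-1}} \cdot \frac{1 + (2s+1) x_{-1} y_{-2}}{1 + (2s+1) x_{-1} y_0}$, provided all denominators involved are nonzero. -/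
private lemma step1 {u v t c : ℝ}
    (h1 : v * (1 + c * t) = t) (h2 : u * (1 + v) = v) :
    u * (1 + (c + 1) * t) = t := by
  linear_combination (1 + c * t) * h2 + (1 - u) * h1

private lemma step2 {u w v t c : ℝ}
    (h1 : v * (1 + c * t) = t) (h2 : w * (1 + v) = v) (h3 : u * (1 + w) = w) :
    u * (1 + (c + 2) * t) = t := by
  have h4 := step1 (step1 h1 h2) h3
  linear_combination h4

set_option maxHeartbeats 2000000 in
/-- The case `a = b = c = d = 1`: explicit form of `x_{4n-2}`. -/
theorem stmt9 (x y : ℤ → ℝ)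
    (hx : ∀ n : ℤ, -2 ≤ n → x n ≠ 0) (hy : ∀ n : ℤ, -2 ≤ n → y n ≠ 0)
    (hdx : ∀ n : ℤ, 0 ≤ n → y n * (1 + x (n - 2) * y (n - 1)) ≠ 0)
    (hdy : ∀ n : ℤ, 0 ≤ n → x n * (1 + y (n - 2) * x (n - 1)) ≠ 0)
    (hrecx : ∀ n : ℤ, 0 ≤ n →
      x (n + 1) = x (n - 2) * y (n - 1) / (y n * (1 + x (n - 2) * y (n - 1))))
    (hrecy : ∀ n : ℤ, 0 ≤ n →
      y (n + 1) = y (n - 2) * x (n - 1) / (x n * (1 + y (n - 2) * x (n - 1))))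
    (hden1 : ∀ s : ℕ, 1 + 2 * (s : ℝ) * (x 0 * y (-1)) ≠ 0)
    (hden2 : ∀ s : ℕ, 1 + (2 * (s : ℝ) + 1) * (x (-1) * y 0) ≠ 0) :
    ∀ n : ℕ, 1 ≤ n →
      x (4 * (n : ℤ) - 2) =
        x 0 ^ n * y 0 ^ n / (y (-2) ^ n * x (-2) ^ (n - 1)) *
        ∏ s ∈ Finset.range n,
          (1 + 2 * (s : ℝ) * (x (-2) * y (-1))) / (1 + 2 * (s : ℝ) * (x 0 * y (-1))) *
          ((1 + (2 * (s : ℝ) + 1) * (x (-1) * y (-2))) /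
            (1 + (2 * (s : ℝ) + 1) * (x (-1) * y 0))) := by
  have hQm : ∀ m : ℤ, -1 ≤ m →
      x (m + 1) * y (m + 2) * (1 + x m * y (m - 1)) = x m * y (m - 1) := by
    intro m hm
    have h := hrecy (m + 1) (by omega)
    have hd := hdy (m + 1) (by omega)
    rw [show m + 1 - 2 = m - 1 by ring, show m + 1 - 1 = m by ring] at h hd
    rw [show m + 1 + 1 = m + 2 by ring] at h
    have hxm1 : x (m + 1) ≠ 0 := left_ne_zero_of_mul hd
    have hd2 : (1 + y (m - 1) * x m) ≠ 0 := right_ne_zero_of_mul hd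
    rw [h]
    field_simp
  have hP2 : ∀ m : ℤ, -2 ≤ m →
      x (m + 3) * y (m + 2) * (1 + x m * y (m + 1)) = x m * y (m + 1) := by
    intro m hm
    have h := hrecx (m + 2) (by omega)
    have hd := hdx (m + 2) (by omega)
    rw [show m + 2 - 2 = m by ring, show m + 2 - 1 = m + 1 by ring] at h hd
    rw [show m + 2 + 1 = m + 3 by ring] at h
    have hym2 : y (m + 2) ≠ 0 := left_ne_zero_of_mul hd
    have hd2 : (1 + x m * y (m + 1)) ≠ 0 := right_ne_zero_of_mul hd
    rw [h]
    field_simp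
  have chainP : ∀ m : ℤ, -1 ≤ m → ∀ t c : ℝ,
      x m * y (m - 1) * (1 + c * t) = t →
      x (m + 4) * y (m + 3) * (1 + (c + 2) * t) = t := by
    intro m hm t c h1
    have h2 := hQm m (by omega)
    have h3 := hP2 (m + 1) (by omega)
    rw [show m + 1 + 3 = m + 4 by ring, show m + 1 + 2 = m + 3 by ring,
        show m + 1 + 1 = m + 2 by ring] at h3
    exact step2 h1 h2 h3
  have chainQ : ∀ m : ℤ, -2 ≤ m → ∀ t c : ℝ,
      x m * y (m + 1) * (1 + c * t) = t →
      x (m + 4) * y (m + 5) * (1 + (c + 2) * t) = t := by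
    intro m hm t c h1
    have h2 := hP2 m (by omega)
    have h3 := hQm (m + 3) (by omega)
    rw [show m + 3 + 1 = m + 4 by ring, show m + 3 + 2 = m + 5 by ring,
        show m + 3 - 1 = m + 2 by ring] at h3
    exact step2 h1 h2 h3
  have claim : ∀ k : ℕ,
      x (4 * (k : ℤ)) * y (4 * (k : ℤ) - 1) * (1 + 2 * (k : ℝ) * (x 0 * y (-1))) = x 0 * y (-1) ∧
      x (4 * (k : ℤ) + 2) * y (4 * (k : ℤ) + 1) * (1 + (2 * (k : ℝ) + 1) * (x (-1) * y 0)) = x (-1) * y 0 ∧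
      x (4 * (k : ℤ)) * y (4 * (k : ℤ) + 1) * (1 + (2 * (k : ℝ) + 1) * (x (-1) * y (-2))) = x (-1) * y (-2) ∧
      x (4 * (k : ℤ) + 2) * y (4 * (k : ℤ) + 3) * (1 + (2 * (k : ℝ) + 2) * (x (-2) * y (-1))) = x (-2) * y (-1) := by
    intro k
    induction k with
    | zero =>
      refine ⟨by norm_num, ?_, ?_, ?_⟩
      · have h := hP2 (-1) (by norm_num)
        norm_num at h ⊢
        linear_combination h
      · have h := hQm (-1) (by norm_num)
        norm_num at h ⊢
        linear_combination h
      · have h1 : (x (-2) * y (-1)) * (1 + 0 * (x (-2) * y (-1))) = x (-2) * y (-1) := by ring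
        have h := chainQ (-2) (by norm_num) _ _ h1
        norm_num at h ⊢
        linear_combination h
    | succ k ih =>
      obtain ⟨ia, ib, ic, id'⟩ := ih
      have ha := chainP (4 * (k : ℤ)) (by omega) _ _ ia
      have hb' : x (4 * (k : ℤ) + 2) * y (4 * (k : ℤ) + 2 - 1) *
          (1 + (2 * (k : ℝ) + 1) * (x (-1) * y 0)) = x (-1) * y 0 := by
        rw [show (4 * (k : ℤ) + 2 - 1) = 4 * (k : ℤ) + 1 by ring]; exact ib
      have hb := chainP (4 * (k : ℤ) + 2) (by omega) _ _ hb'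
      have hc := chainQ (4 * (k : ℤ)) (by omega) _ _ ic
      have hd' : x (4 * (k : ℤ) + 2) * y (4 * (k : ℤ) + 2 + 1) *
          (1 + (2 * (k : ℝ) + 2) * (x (-2) * y (-1))) = x (-2) * y (-1) := by
        rw [show (4 * (k : ℤ) + 2 + 1) = 4 * (k : ℤ) + 3 by ring]; exact id'
      have hd := chainQ (4 * (k : ℤ) + 2) (by omega) _ _ hd'
      push_cast
      refine ⟨?_, ?_, ?_, ?_⟩
      · rw [show (4 * (k : ℤ) + 4) = 4 * ((k : ℤ) + 1) by ring,
            show (4 * (k : ℤ) + 3) = 4 * ((k : ℤ) + 1) - 1 by ring] at ha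
        linear_combination ha
      · rw [show (4 * (k : ℤ) + 2 + 4) = 4 * ((k : ℤ) + 1) + 2 by ring,
            show (4 * (k : ℤ) + 2 + 3) = 4 * ((k : ℤ) + 1) + 1 by ring] at hb
        linear_combination hb
      · rw [show (4 * (k : ℤ) + 4) = 4 * ((k : ℤ) + 1) by ring,
            show (4 * (k : ℤ) + 5) = 4 * ((k : ℤ) + 1) + 1 by ring] at hc
        linear_combination hc
      · rw [show (4 * (k : ℤ) + 2 + 4) = 4 * ((k : ℤ) + 1) + 2 by ring,
            show (4 * (k : ℤ) + 2 + 5) = 4 * ((k : ℤ) + 1) + 3 by ring] at hd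
        linear_combination hd
  -- basic nonvanishing facts
  have hCne : x (-1) * y (-2) ≠ 0 := mul_ne_zero (hx (-1) (by norm_num)) (hy (-2) (by norm_num))
  have hDne : x (-1) * y 0 ≠ 0 := mul_ne_zero (hx (-1) (by norm_num)) (hy 0 (by norm_num))
  have hBne : x (-2) * y (-1) ≠ 0 := mul_ne_zero (hx (-2) (by norm_num)) (hy (-1) (by norm_num))
  have hAne : x 0 * y (-1) ≠ 0 := mul_ne_zero (hx 0 (by norm_num)) (hy (-1) (by norm_num))
  intro n hn
  induction n, hn using Nat.le_induction with
  | base =>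
    have cb := (claim 0).2.1
    have cc := (claim 0).2.2.1
    norm_num at cb cc ⊢
    have h1C : 1 + x (-1) * y (-2) ≠ 0 := by
      intro h; rw [h, mul_zero] at cc; exact hCne cc.symm
    have h1D : 1 + x (-1) * y 0 ≠ 0 := by
      have := hden2 0; norm_num at this; exact this
    have e1 : y 1 = x (-1) * y (-2) / (x 0 * (1 + x (-1) * y (-2))) := by
      rw [eq_div_iff (mul_ne_zero (hx 0 (by norm_num)) h1C)]; linear_combination cc
    have e2 : x 2 = x (-1) * y 0 / (y 1 * (1 + x (-1) * y 0)) := by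
      rw [eq_div_iff (mul_ne_zero (hy 1 (by norm_num)) h1D)]; linear_combination cb
    rw [e2, e1]
    field_simp [hx (-1) (by norm_num : (-2:ℤ) ≤ -1), hy (-2) (by norm_num : (-2:ℤ) ≤ -2), h1C, h1D]
  | succ n hn ih =>
    obtain ⟨m, rfl⟩ := Nat.exists_eq_add_of_le hn
    rw [Finset.prod_range_succ]
    push_cast at ih ⊢
    simp only [show (1 + m - 1 : ℕ) = m by omega] at ih
    rw [show (4 * (1 + (m:ℤ)) - 2) = 4 * m + 2 by ring] at ih
    rw [show (4 * (1 + (m:ℤ) + 1) - 2) = 4 * m + 6 by ring]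
    have ca : x (4 * (m:ℤ) + 4) * y (4 * (m:ℤ) + 3) *
        (1 + 2 * (1 + (m:ℝ)) * (x 0 * y (-1))) = x 0 * y (-1) := by
      have h := (claim (m + 1)).1
      push_cast at h
      rw [show (4 * ((m:ℤ) + 1) - 1) = 4 * m + 3 by ring,
          show (4 * ((m:ℤ) + 1)) = 4 * m + 4 by ring] at h
      linear_combination h
    have cb : x (4 * (m:ℤ) + 6) * y (4 * (m:ℤ) + 5) *
        (1 + (2 * (1 + (m:ℝ)) + 1) * (x (-1) * y 0)) = x (-1) * y 0 := by
      have h := (claim (m + 1)).2.1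
      push_cast at h
      rw [show (4 * ((m:ℤ) + 1) + 2) = 4 * m + 6 by ring,
          show (4 * ((m:ℤ) + 1) + 1) = 4 * m + 5 by ring] at h
      linear_combination h
    have cc : x (4 * (m:ℤ) + 4) * y (4 * (m:ℤ) + 5) *
        (1 + (2 * (1 + (m:ℝ)) + 1) * (x (-1) * y (-2))) = x (-1) * y (-2) := by
      have h := (claim (m + 1)).2.2.1
      push_cast at h
      rw [show (4 * ((m:ℤ) + 1) + 1) = 4 * m + 5 by ring,
          show (4 * ((m:ℤ) + 1)) = 4 * m + 4 by ring] at h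
      linear_combination h
    have cd : x (4 * (m:ℤ) + 2) * y (4 * (m:ℤ) + 3) *
        (1 + 2 * (1 + (m:ℝ)) * (x (-2) * y (-1))) = x (-2) * y (-1) := by
      have h := (claim m).2.2.2
      linear_combination h
    -- nonvanishing of the four denominators
    have hd1 : (1 + (2 * (1 + (m:ℝ)) + 1) * (x (-1) * y 0)) ≠ 0 := by
      intro h; rw [h, mul_zero] at cb; exact hDne cb.symm
    have hd2 : (1 + 2 * (1 + (m:ℝ)) * (x 0 * y (-1))) ≠ 0 := by
      intro h; rw [h, mul_zero] at ca; exact hAne ca.symm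
    have hd3 : (1 + (2 * (1 + (m:ℝ)) + 1) * (x (-1) * y (-2))) ≠ 0 := by
      intro h; rw [h, mul_zero] at cc; exact hCne cc.symm
    have hd4 : (1 + 2 * (1 + (m:ℝ)) * (x (-2) * y (-1))) ≠ 0 := by
      intro h; rw [h, mul_zero] at cd; exact hBne cd.symm
    have hbig : (x (-1) * y (-2)) * (x (-2) * y (-1)) *
        (1 + (2 * (1 + (m:ℝ)) + 1) * (x (-1) * y 0)) *
        (1 + 2 * (1 + (m:ℝ)) * (x 0 * y (-1))) ≠ 0 :=
      mul_ne_zero (mul_ne_zero (mul_ne_zero hCne hBne) hd1) hd2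
    have e6 : x (4 * (m:ℤ) + 6) =
        x (4 * (m:ℤ) + 2) * ((x (-1) * y 0) * (x 0 * y (-1)) *
          (1 + (2 * (1 + (m:ℝ)) + 1) * (x (-1) * y (-2))) *
          (1 + 2 * (1 + (m:ℝ)) * (x (-2) * y (-1)))) /
        ((x (-1) * y (-2)) * (x (-2) * y (-1)) *
          (1 + (2 * (1 + (m:ℝ)) + 1) * (x (-1) * y 0)) *
          (1 + 2 * (1 + (m:ℝ)) * (x 0 * y (-1)))) := by
      rw [eq_div_iff hbig]
      linear_combination
        x (4 * (m:ℤ) + 2) * (1 + (2 * (1 + (m:ℝ)) + 1) * (x (-1) * y (-2))) *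
            (1 + 2 * (1 + (m:ℝ)) * (x (-2) * y (-1))) * (x 0 * y (-1)) * cb +
        x (4 * (m:ℤ) + 2) * (1 + (2 * (1 + (m:ℝ)) + 1) * (x (-1) * y (-2))) *
            (1 + 2 * (1 + (m:ℝ)) * (x (-2) * y (-1))) *
            (x (4 * (m:ℤ) + 6) * y (4 * (m:ℤ) + 5)) *
            (1 + (2 * (1 + (m:ℝ)) + 1) * (x (-1) * y 0)) * ca -
        x (4 * (m:ℤ) + 6) * (1 + (2 * (1 + (m:ℝ)) + 1) * (x (-1) * y 0)) *
            (1 + 2 * (1 + (m:ℝ)) * (x 0 * y (-1))) * (x (-2) * y (-1)) * cc -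
        x (4 * (m:ℤ) + 6) * (1 + (2 * (1 + (m:ℝ)) + 1) * (x (-1) * y 0)) *
            (1 + 2 * (1 + (m:ℝ)) * (x 0 * y (-1))) *
            (x (4 * (m:ℤ) + 4) * y (4 * (m:ℤ) + 5)) *
            (1 + (2 * (1 + (m:ℝ)) + 1) * (x (-1) * y (-2))) * cd
    rw [e6, ih]
    set P : ℝ := ∏ s ∈ Finset.range (1 + m),
        (1 + 2 * (s : ℝ) * (x (-2) * y (-1))) / (1 + 2 * (s : ℝ) * (x 0 * y (-1))) *
          ((1 + (2 * (s : ℝ) + 1) * (x (-1) * y (-2))) /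
            (1 + (2 * (s : ℝ) + 1) * (x (-1) * y 0))) with hP
    field_simp [hd1, hd2, hd3, hd4, hCne, hBne, hDne, hAne,
      hx (-1) (by norm_num : (-2:ℤ) ≤ -1), hx (-2) (by norm_num : (-2:ℤ) ≤ -2),
      hy (-2) (by norm_num : (-2:ℤ) ≤ -2), hy (-1) (by norm_num : (-2:ℤ) ≤ -1),
      hx 0 (by norm_num : (-2:ℤ) ≤ 0), hy 0 (by norm_num : (-2:ℤ) ≤ 0),
      pow_ne_zero]
    ring
end

section
/- Consider the system $x_{n+1} = \frac{x_{n-2} y_{n-1}}{y_n (1 + x_{n-2} y_{n-1})}$, $y_{n+1} = \frac{y_{n-2} x_{n-1}}{x_n (1 + y_{n-2} x_{n-1})}$. Then for all $n \ge 0$, $y_{4n} = \frac{x_0^n y_0^{n+1}}{x_{-2}^n y_{-2}^n} \prod_{s=0}^{n-1} \frac{1 + (2s+1) x_{-2} y_{-1}}{1 + (2s+1) x_0 y_{-1}} \cdot \frac{1 + (2s+2) x_{-1} y_{-2}}{1 + (2s+2) x_{-1} y_0}$, provided all denominators involved are nonzero. -/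
lemma gstep {t a b k : ℝ} (ha : a = t / (1 + k * t)) (hk : 1 + k * t ≠ 0)
    (h1 : 1 + a ≠ 0) (hb : b = a / (1 + a)) :
    b = t / (1 + (k + 1) * t) ∧ 1 + (k + 1) * t ≠ 0 := by
  have hden : 1 + a = (1 + (k + 1) * t) / (1 + k * t) := by
    rw [ha, eq_div_iff hk, add_mul, div_mul_cancel₀ _ hk]; ring
  have h2 : 1 + (k + 1) * t ≠ 0 := by
    intro h; apply h1; rw [hden, h, zero_div]
  refine ⟨?_, h2⟩
  rw [hb, ha]
  have h3 : 1 + t / (1 + k * t) = (1 + (k + 1) * t) / (1 + k * t) := by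
    rw [eq_div_iff hk, add_mul, div_mul_cancel₀ _ hk]; ring
  rw [h3, div_div_div_cancel_right₀]
  exact hk

lemma chain (P Q : ℤ → ℝ) (t : ℝ) (r : ℤ)
    (stepP : ∀ n : ℤ, r ≤ n → P n = Q (n - 2) / (1 + Q (n - 2)))
    (stepQ : ∀ n : ℤ, r ≤ n → Q n = P (n - 2) / (1 + P (n - 2)))
    (hP1 : ∀ n : ℤ, r ≤ n → 1 + Q (n - 2) ≠ 0)
    (hQ1 : ∀ n : ℤ, r ≤ n → 1 + P (n - 2) ≠ 0)
    (ht : Q (r - 2) = t) :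
    ∀ m : ℕ,
      (P (r + 4 * m) = t / (1 + (2 * (m : ℝ) + 1) * t) ∧ 1 + (2 * (m : ℝ) + 1) * t ≠ 0)
      ∧ (Q (r + 4 * m + 2) = t / (1 + (2 * (m : ℝ) + 2) * t) ∧ 1 + (2 * (m : ℝ) + 2) * t ≠ 0) := by
  intro m
  induction m with
  | zero =>
    have hPr : P r = t / (1 + t) := by
      rw [stepP r le_rfl, ht]
    have h1t : 1 + t ≠ 0 := by
      have := hP1 r le_rfl; rwa [ht] at this
    have e2 : r + 2 - 2 = r := by ring
    have hQr : Q (r + 2) = P r / (1 + P r) := by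
      have := stepQ (r + 2) (by linarith); rwa [e2] at this
    have h1P : 1 + P r ≠ 0 := by
      have := hQ1 (r + 2) (by linarith); rwa [e2] at this
    have base : P r = t / (1 + (0 + 1) * t) ∧ 1 + (0 + 1) * t ≠ 0 :=
      gstep (t := t) (a := t) (k := 0) (by norm_num) (by norm_num) h1t hPr
    have step1 : Q (r + 2) = t / (1 + ((0:ℝ) + 1 + 1) * t) ∧ 1 + ((0:ℝ) + 1 + 1) * t ≠ 0 :=
      gstep base.1 base.2 h1P hQr
    norm_num at step1
    refine ⟨⟨?_, ?_⟩, ⟨?_, ?_⟩⟩ <;> norm_num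
    exacts [hPr, h1t, step1.1, step1.2]
  | succ m ih =>
    obtain ⟨⟨hPm, hPk⟩, ⟨hQm, hQk⟩⟩ := ih
    have hm4 : (0:ℤ) ≤ 4 * (m : ℤ) := by positivity
    have e1 : r + 4 * (m : ℤ) + 4 - 2 = r + 4 * m + 2 := by ring
    have hPnew : P (r + 4 * m + 4) = Q (r + 4 * m + 2) / (1 + Q (r + 4 * m + 2)) := by
      have := stepP (r + 4 * m + 4) (by linarith); rwa [e1] at this
    have h1new : 1 + Q (r + 4 * m + 2) ≠ 0 := by
      have := hP1 (r + 4 * m + 4) (by linarith); rwa [e1] at this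
    have sA : P (r + 4 * m + 4) = t / (1 + (2 * (m : ℝ) + 2 + 1) * t) ∧
        1 + (2 * (m : ℝ) + 2 + 1) * t ≠ 0 :=
      gstep hQm hQk h1new hPnew
    have e2 : r + 4 * (m : ℤ) + 6 - 2 = r + 4 * m + 4 := by ring
    have hQnew : Q (r + 4 * m + 6) = P (r + 4 * m + 4) / (1 + P (r + 4 * m + 4)) := by
      have := stepQ (r + 4 * m + 6) (by linarith); rwa [e2] at this
    have h2new : 1 + P (r + 4 * m + 4) ≠ 0 := by
      have := hQ1 (r + 4 * m + 6) (by linarith); rwa [e2] at this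
    have sB : Q (r + 4 * m + 6) = t / (1 + (2 * (m : ℝ) + 2 + 1 + 1) * t) ∧
        1 + (2 * (m : ℝ) + 2 + 1 + 1) * t ≠ 0 :=
      gstep sA.1 sA.2 h2new hQnew
    have eI1 : r + 4 * ((m : ℤ) + 1) = r + 4 * m + 4 := by ring
    have eI2 : r + 4 * ((m : ℤ) + 1) + 2 = r + 4 * m + 6 := by ring
    refine ⟨⟨?_, ?_⟩, ⟨?_, ?_⟩⟩
    · push_cast; rw [eI1, sA.1]; congr 1; ring
    · push_cast; convert sA.2 using 2; ring
    · push_cast; rw [eI2, sB.1]; congr 1; ring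
    · push_cast; convert sB.2 using 2; ring

/-- The case `a = b = c = d = 1`: explicit form of `y_{4n}`. -/
theorem stmt10 (x y : ℤ → ℝ)
    (hx : ∀ n : ℤ, -2 ≤ n → x n ≠ 0) (hy : ∀ n : ℤ, -2 ≤ n → y n ≠ 0)
    (hdx : ∀ n : ℤ, 0 ≤ n → y n * (1 + x (n - 2) * y (n - 1)) ≠ 0)
    (hdy : ∀ n : ℤ, 0 ≤ n → x n * (1 + y (n - 2) * x (n - 1)) ≠ 0)
    (hrecx : ∀ n : ℤ, 0 ≤ n →
      x (n + 1) = x (n - 2) * y (n - 1) / (y n * (1 + x (n - 2) * y (n - 1))))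
    (hrecy : ∀ n : ℤ, 0 ≤ n →
      y (n + 1) = y (n - 2) * x (n - 1) / (x n * (1 + y (n - 2) * x (n - 1))))
    (hden1 : ∀ s : ℕ, 1 + (2 * (s : ℝ) + 1) * (x 0 * y (-1)) ≠ 0)
    (hden2 : ∀ s : ℕ, 1 + (2 * (s : ℝ) + 2) * (x (-1) * y 0) ≠ 0) :
    ∀ n : ℕ,
      y (4 * (n : ℤ)) =
        x 0 ^ n * y 0 ^ (n + 1) / (x (-2) ^ n * y (-2) ^ n) *
        ∏ s ∈ Finset.range n,
          (1 + (2 * (s : ℝ) + 1) * (x (-2) * y (-1))) /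
            (1 + (2 * (s : ℝ) + 1) * (x 0 * y (-1))) *
          ((1 + (2 * (s : ℝ) + 2) * (x (-1) * y (-2))) /
            (1 + (2 * (s : ℝ) + 2) * (x (-1) * y 0))) := by
  -- step lemmas in P/Q form
  have hd1 : ∀ n : ℤ, 0 ≤ n → 1 + x (n - 2) * y (n - 2 + 1) ≠ 0 := by
    intro n hn
    have e : n - 2 + 1 = n - 1 := by ring
    rw [e]
    exact right_ne_zero_of_mul (hdx n hn)
  have hd2 : ∀ n : ℤ, 0 ≤ n → 1 + x (n - 2 + 1) * y (n - 2) ≠ 0 := by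
    intro n hn
    have e : n - 2 + 1 = n - 1 := by ring
    rw [e]
    have := right_ne_zero_of_mul (hdy n hn)
    rwa [mul_comm (y (n - 2))] at this
  have hsP : ∀ n : ℤ, 0 ≤ n →
      x (n + 1) * y n = x (n - 2) * y (n - 2 + 1) / (1 + x (n - 2) * y (n - 2 + 1)) := by
    intro n hn
    have e : n - 2 + 1 = n - 1 := by ring
    rw [e]
    have hyn := hy n (by linarith)
    have hq := right_ne_zero_of_mul (hdx n hn)
    rw [hrecx n hn]
    field_simp
  have hsQ : ∀ n : ℤ, 0 ≤ n →
      x n * y (n + 1) = x (n - 2 + 1) * y (n - 2) / (1 + x (n - 2 + 1) * y (n - 2)) := by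
    intro n hn
    have e : n - 2 + 1 = n - 1 := by ring
    rw [e]
    have hxn := hx n (by linarith)
    have hq := right_ne_zero_of_mul (hdy n hn)
    rw [mul_comm (y (n - 2)) (x (n - 1))] at hq
    rw [hrecy n hn]
    rw [mul_comm (y (n - 2)) (x (n - 1))]
    field_simp
  -- the four chains
  have chA := chain (fun m => x (m + 1) * y m) (fun m => x m * y (m + 1))
    (x (-2) * y (-1)) 0 (fun n hn => hsP n hn) (fun n hn => hsQ n hn)
    (fun n hn => hd1 n hn) (fun n hn => hd2 n hn) (by norm_num)
  have chD := chain (fun m => x m * y (m + 1)) (fun m => x (m + 1) * y m)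
    (x (-1) * y (-2)) 0 (fun n hn => hsQ n hn) (fun n hn => hsP n hn)
    (fun n hn => hd2 n hn) (fun n hn => hd1 n hn) (by norm_num)
  have chB := chain (fun m => x (m + 1) * y m) (fun m => x m * y (m + 1))
    (x (-1) * y 0) 1 (fun n hn => hsP n (by linarith)) (fun n hn => hsQ n (by linarith))
    (fun n hn => hd1 n (by linarith)) (fun n hn => hd2 n (by linarith)) (by norm_num)
  have chE := chain (fun m => x m * y (m + 1)) (fun m => x (m + 1) * y m)
    (x 0 * y (-1)) 1 (fun n hn => hsQ n (by linarith)) (fun n hn => hsP n (by linarith))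
    (fun n hn => hd2 n (by linarith)) (fun n hn => hd1 n (by linarith)) (by norm_num)
  intro n
  induction n with
  | zero => simp
  | succ n ih =>
    -- closed forms at the four needed spots
    have hp0 : x (4 * (n : ℤ) + 1) * y (4 * (n : ℤ)) =
        x (-2) * y (-1) / (1 + (2 * (n : ℝ) + 1) * (x (-2) * y (-1))) := by
      have h := (chA n).1.1
      rwa [show (0 : ℤ) + 4 * (n : ℤ) = 4 * n from by ring] at h
    have hp0' : 1 + (2 * (n : ℝ) + 1) * (x (-2) * y (-1)) ≠ 0 := (chA n).1.2
    have hp2 : x (4 * (n : ℤ) + 3) * y (4 * (n : ℤ) + 2) =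
        x (-1) * y (-2) / (1 + (2 * (n : ℝ) + 2) * (x (-1) * y (-2))) := by
      have h := (chD n).2.1
      rw [show (0 : ℤ) + 4 * (n : ℤ) + 2 = 4 * n + 2 from by ring] at h
      rwa [show (4 * (n : ℤ) + 2) + 1 = 4 * n + 3 from by ring] at h
    have hp2' : 1 + (2 * (n : ℝ) + 2) * (x (-1) * y (-2)) ≠ 0 := (chD n).2.2
    have hq1 : x (4 * (n : ℤ) + 1) * y (4 * (n : ℤ) + 2) =
        x 0 * y (-1) / (1 + (2 * (n : ℝ) + 1) * (x 0 * y (-1))) := by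
      have h := (chE n).1.1
      rw [show (1 : ℤ) + 4 * (n : ℤ) = 4 * n + 1 from by ring] at h
      rwa [show (4 * (n : ℤ) + 1) + 1 = 4 * n + 2 from by ring] at h
    have hq3 : x (4 * (n : ℤ) + 3) * y (4 * (n : ℤ) + 4) =
        x (-1) * y 0 / (1 + (2 * (n : ℝ) + 2) * (x (-1) * y 0)) := by
      have h := (chB n).2.1
      rw [show (1 : ℤ) + 4 * (n : ℤ) + 2 = 4 * n + 3 from by ring] at h
      rwa [show (4 * (n : ℤ) + 3) + 1 = 4 * n + 4 from by ring] at h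
    have hn0 : (0 : ℤ) ≤ 4 * (n : ℤ) := by positivity
    have hx1 : x (4 * (n : ℤ) + 1) ≠ 0 := hx _ (by linarith)
    have hx3 : x (4 * (n : ℤ) + 3) ≠ 0 := hx _ (by linarith)
    have hy0' : y (4 * (n : ℤ)) ≠ 0 := hy _ (by linarith)
    have hy2 : y (4 * (n : ℤ) + 2) ≠ 0 := hy _ (by linarith)
    -- ratio identity
    have hy4 : y (4 * (n : ℤ) + 4) =
        (x (4 * (n : ℤ) + 3) * y (4 * (n : ℤ) + 4)) * (x (4 * (n : ℤ) + 1) * y (4 * (n : ℤ) + 2)) *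
          y (4 * (n : ℤ)) /
        ((x (4 * (n : ℤ) + 3) * y (4 * (n : ℤ) + 2)) * (x (4 * (n : ℤ) + 1) * y (4 * (n : ℤ)))) := by
      rw [eq_div_iff (by positivity)]
      ring
    rw [hq3, hq1, hp2, hp0, ih] at hy4
    have ecast : (4 : ℤ) * ((n : ℕ) + 1 : ℕ) = 4 * (n : ℤ) + 4 := by push_cast; ring
    rw [ecast, hy4, Finset.prod_range_succ]
    have hxm2 := hx (-2) (by norm_num)
    have hym2 := hy (-2) (by norm_num)
    have hxm1 := hx (-1) (by norm_num)
    have hym1 := hy (-1) (by norm_num)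
    have hx0 := hx 0 (by norm_num)
    have hy0 := hy 0 (by norm_num)
    have hE := hden1 n
    have hB := hden2 n
    set Pr : ℝ := ∏ s ∈ Finset.range n,
        (1 + (2 * (s : ℝ) + 1) * (x (-2) * y (-1))) / (1 + (2 * (s : ℝ) + 1) * (x 0 * y (-1))) *
        ((1 + (2 * (s : ℝ) + 2) * (x (-1) * y (-2))) / (1 + (2 * (s : ℝ) + 2) * (x (-1) * y 0)))
      with hPrdef
    field_simp
    ring
end

section
/- Consider the system $x_{n+1} = \frac{x_{n-2} y_{n-1}}{y_n (1 - x_{n-2} y_{n-1})}$, $y_{n+1} = \frac{y_{n-2} x_{n-1}}{x_n (1 - y_{n-2} x_{n-1})}$ (the case $a = c = 1$, $b = d = -1$). Then for all $n \ge 0$, $x_{4n} = \frac{x_0^{n+1} y_0^n}{x_{-2}^n y_{-2}^n} \prod_{s=0}^{n-1} \frac{1 - (2s+1) x_{-1} y_{-2}}{1 - (2s+1) x_{-1} y_0} \cdot \frac{1 - (2s+2) x_{-2} y_{-1}}{1 - (2s+2) x_0 y_{-1}}$, provided all denominators involved are nonzero. -/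
private lemma aux_step (t k : ℝ) (h : 1 - k*t ≠ 0) (h2 : 1 - t/(1-k*t) ≠ 0) :
    1 - (k+1)*t ≠ 0 ∧ t/(1-k*t) / (1 - t/(1-k*t)) = t/(1-(k+1)*t) := by
  have key : 1 - t/(1-k*t) = (1-(k+1)*t)/(1-k*t) := by
    rw [eq_div_iff h, sub_mul, div_mul_cancel₀ _ h]; ring
  have hne : 1 - (k+1)*t ≠ 0 := by
    intro h0
    rw [key, h0, zero_div] at h2
    exact h2 rfl
  refine ⟨hne, ?_⟩
  rw [key]
  rw [div_div_div_cancel_right₀ h]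

private lemma one_step (w t k : ℝ) (hk : 1 - k*t ≠ 0) (hw : w = t/(1-k*t)) (h1 : 1 - w ≠ 0) :
    1 - (k+1)*t ≠ 0 ∧ w/(1-w) = t/(1-(k+1)*t) := by
  subst hw; exact aux_step t k hk h1

private lemma chain_s11 (u v : ℤ → ℝ) (a b c d : ℝ)
    (hu1 : u (-1) = a) (hv1 : v (-1) = b) (hu0 : u 0 = c) (hv0 : v 0 = d)
    (h1u : ∀ m : ℤ, -1 ≤ m → 1 - u m ≠ 0)
    (h1v : ∀ m : ℤ, -1 ≤ m → 1 - v m ≠ 0)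
    (hur : ∀ m : ℤ, -1 ≤ m → u (m+2) = v m / (1 - v m))
    (hvr : ∀ m : ℤ, -1 ≤ m → v (m+2) = u m / (1 - u m)) :
    ∀ j : ℕ,
      ((1 - 2*(j:ℝ)*a ≠ 0 ∧ u (4*(j:ℤ)-1) = a / (1-2*(j:ℝ)*a)) ∧
      (1 - 2*(j:ℝ)*b ≠ 0 ∧ v (4*(j:ℤ)-1) = b / (1-2*(j:ℝ)*b)) ∧
      (1 - 2*(j:ℝ)*c ≠ 0 ∧ u (4*(j:ℤ)) = c / (1-2*(j:ℝ)*c)) ∧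
      (1 - 2*(j:ℝ)*d ≠ 0 ∧ v (4*(j:ℤ)) = d / (1-2*(j:ℝ)*d))) ∧
      ((1 - (2*(j:ℝ)+1)*b ≠ 0 ∧ u (4*(j:ℤ)+1) = b / (1-(2*(j:ℝ)+1)*b)) ∧
      (1 - (2*(j:ℝ)+1)*a ≠ 0 ∧ v (4*(j:ℤ)+1) = a / (1-(2*(j:ℝ)+1)*a)) ∧
      (1 - (2*(j:ℝ)+1)*d ≠ 0 ∧ u (4*(j:ℤ)+2) = d / (1-(2*(j:ℝ)+1)*d)) ∧
      (1 - (2*(j:ℝ)+1)*c ≠ 0 ∧ v (4*(j:ℤ)+2) = c / (1-(2*(j:ℝ)+1)*c))) := by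
  intro j
  induction j with
  | zero =>
    have e1 : u (1:ℤ) = v (-1) / (1 - v (-1)) := by
      have := hur (-1) le_rfl; norm_num at this; exact this
    have e2 : v (1:ℤ) = u (-1) / (1 - u (-1)) := by
      have := hvr (-1) le_rfl; norm_num at this; exact this
    have e3 : u (2:ℤ) = v 0 / (1 - v 0) := by
      have := hur 0 (by norm_num); norm_num at this; exact this
    have e4 : v (2:ℤ) = u 0 / (1 - u 0) := by
      have := hvr 0 (by norm_num); norm_num at this; exact this
    have hb := h1v (-1) le_rfl
    have ha := h1u (-1) le_rfl
    have hc := h1u 0 (by norm_num)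
    have hd := h1v 0 (by norm_num)
    rw [hu1] at ha e2
    rw [hv1] at hb e1
    rw [hu0] at hc e4
    rw [hv0] at hd e3
    have ha' : (1:ℝ) ≠ a := sub_ne_zero.mp ha
    have hb' : (1:ℝ) ≠ b := sub_ne_zero.mp hb
    have hc' : (1:ℝ) ≠ c := sub_ne_zero.mp hc
    have hd' : (1:ℝ) ≠ d := sub_ne_zero.mp hd
    refine ⟨⟨⟨?_, ?_⟩, ⟨?_, ?_⟩, ⟨?_, ?_⟩, ⟨?_, ?_⟩⟩, ⟨?_, ?_⟩, ⟨?_, ?_⟩, ⟨?_, ?_⟩, ⟨?_, ?_⟩⟩ <;>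
      norm_num [e1, e2, e3, e4, hu1, hv1, hu0, hv0, sub_ne_zero] <;>
      first | exact ha' | exact hb' | exact hc' | exact hd'
  | succ j ih =>
    obtain ⟨⟨-, -, ⟨hcne, hcu⟩, ⟨hdne, hdv⟩⟩, ⟨hbne, hbu⟩, ⟨hane, hav⟩, ⟨hdne2, hdu⟩, ⟨hcne2, hcv⟩⟩ := ih
    -- u (4j+3) from v (4j+1)
    have s1 := one_step (v (4*(j:ℤ)+1)) a (2*(j:ℝ)+1) hane hav (h1v _ (by omega))
    have e1 : u (4*(j:ℤ)+3) = v (4*(j:ℤ)+1) / (1 - v (4*(j:ℤ)+1)) := by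
      have := hur (4*(j:ℤ)+1) (by omega)
      have hi : (4*(j:ℤ)+1+2) = 4*(j:ℤ)+3 := by ring
      rwa [hi] at this
    rw [← e1] at s1
    -- v (4j+3) from u (4j+1)
    have s2 := one_step (u (4*(j:ℤ)+1)) b (2*(j:ℝ)+1) hbne hbu (h1u _ (by omega))
    have e2 : v (4*(j:ℤ)+3) = u (4*(j:ℤ)+1) / (1 - u (4*(j:ℤ)+1)) := by
      have := hvr (4*(j:ℤ)+1) (by omega)
      have hi : (4*(j:ℤ)+1+2) = 4*(j:ℤ)+3 := by ring
      rwa [hi] at this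
    rw [← e2] at s2
    -- u (4j+4) from v (4j+2)
    have s3 := one_step (v (4*(j:ℤ)+2)) c (2*(j:ℝ)+1) hcne2 hcv (h1v _ (by omega))
    have e3 : u (4*(j:ℤ)+4) = v (4*(j:ℤ)+2) / (1 - v (4*(j:ℤ)+2)) := by
      have := hur (4*(j:ℤ)+2) (by omega)
      have hi : (4*(j:ℤ)+2+2) = 4*(j:ℤ)+4 := by ring
      rwa [hi] at this
    rw [← e3] at s3
    -- v (4j+4) from u (4j+2)
    have s4 := one_step (u (4*(j:ℤ)+2)) d (2*(j:ℝ)+1) hdne2 hdu (h1u _ (by omega))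
    have e4 : v (4*(j:ℤ)+4) = u (4*(j:ℤ)+2) / (1 - u (4*(j:ℤ)+2)) := by
      have := hvr (4*(j:ℤ)+2) (by omega)
      have hi : (4*(j:ℤ)+2+2) = 4*(j:ℤ)+4 := by ring
      rwa [hi] at this
    rw [← e4] at s4
    -- u (4j+5) from v (4j+3)
    have s5 := one_step (v (4*(j:ℤ)+3)) b (2*(j:ℝ)+1+1) s2.1 s2.2 (h1v _ (by omega))
    have e5 : u (4*(j:ℤ)+5) = v (4*(j:ℤ)+3) / (1 - v (4*(j:ℤ)+3)) := by
      have := hur (4*(j:ℤ)+3) (by omega)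
      have hi : (4*(j:ℤ)+3+2) = 4*(j:ℤ)+5 := by ring
      rwa [hi] at this
    rw [← e5] at s5
    -- v (4j+5) from u (4j+3)
    have s6 := one_step (u (4*(j:ℤ)+3)) a (2*(j:ℝ)+1+1) s1.1 s1.2 (h1u _ (by omega))
    have e6 : v (4*(j:ℤ)+5) = u (4*(j:ℤ)+3) / (1 - u (4*(j:ℤ)+3)) := by
      have := hvr (4*(j:ℤ)+3) (by omega)
      have hi : (4*(j:ℤ)+3+2) = 4*(j:ℤ)+5 := by ring
      rwa [hi] at this
    rw [← e6] at s6
    -- u (4j+6) from v (4j+4)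
    have s7 := one_step (v (4*(j:ℤ)+4)) d (2*(j:ℝ)+1+1) s4.1 s4.2 (h1v _ (by omega))
    have e7 : u (4*(j:ℤ)+6) = v (4*(j:ℤ)+4) / (1 - v (4*(j:ℤ)+4)) := by
      have := hur (4*(j:ℤ)+4) (by omega)
      have hi : (4*(j:ℤ)+4+2) = 4*(j:ℤ)+6 := by ring
      rwa [hi] at this
    rw [← e7] at s7
    -- v (4j+6) from u (4j+4)
    have s8 := one_step (u (4*(j:ℤ)+4)) c (2*(j:ℝ)+1+1) s3.1 s3.2 (h1u _ (by omega))
    have e8 : v (4*(j:ℤ)+6) = u (4*(j:ℤ)+4) / (1 - u (4*(j:ℤ)+4)) := by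
      have := hvr (4*(j:ℤ)+4) (by omega)
      have hi : (4*(j:ℤ)+4+2) = 4*(j:ℤ)+6 := by ring
      rwa [hi] at this
    rw [← e8] at s8
    push_cast
    have i1 : (4*((j:ℤ)+1)-1) = 4*(j:ℤ)+3 := by ring
    have i2 : (4*((j:ℤ)+1)) = 4*(j:ℤ)+4 := by ring
    have i3 : (4*((j:ℤ)+1)+1) = 4*(j:ℤ)+5 := by ring
    have i4 : (4*((j:ℤ)+1)+2) = 4*(j:ℤ)+6 := by ring
    rw [i1, i3, i4, i2]
    have c1 : (2*((j:ℝ)+1)) = 2*(j:ℝ)+1+1 := by ring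
    have c2 : (2*((j:ℝ)+1)+1) = 2*(j:ℝ)+1+1+1 := by ring
    rw [c2, c1]
    exact ⟨⟨s1, s2, s3, s4⟩, s5, s6, s7, s8⟩

/-- The case `a = c = 1`, `b = d = -1`: explicit form of `x_{4n}`. -/
theorem stmt11 (x y : ℤ → ℝ)
    (hx : ∀ n : ℤ, -2 ≤ n → x n ≠ 0) (hy : ∀ n : ℤ, -2 ≤ n → y n ≠ 0)
    (hdx : ∀ n : ℤ, 0 ≤ n → y n * (1 - x (n - 2) * y (n - 1)) ≠ 0)
    (hdy : ∀ n : ℤ, 0 ≤ n → x n * (1 - y (n - 2) * x (n - 1)) ≠ 0)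
    (hrecx : ∀ n : ℤ, 0 ≤ n →
      x (n + 1) = x (n - 2) * y (n - 1) / (y n * (1 - x (n - 2) * y (n - 1))))
    (hrecy : ∀ n : ℤ, 0 ≤ n →
      y (n + 1) = y (n - 2) * x (n - 1) / (x n * (1 - y (n - 2) * x (n - 1))))
    (hden1 : ∀ s : ℕ, 1 - (2 * (s : ℝ) + 1) * (x (-1) * y 0) ≠ 0)
    (hden2 : ∀ s : ℕ, 1 - (2 * (s : ℝ) + 2) * (x 0 * y (-1)) ≠ 0) :
    ∀ n : ℕ,
      x (4 * (n : ℤ)) =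
        x 0 ^ (n + 1) * y 0 ^ n / (x (-2) ^ n * y (-2) ^ n) *
        ∏ s ∈ Finset.range n,
          (1 - (2 * (s : ℝ) + 1) * (x (-1) * y (-2))) /
            (1 - (2 * (s : ℝ) + 1) * (x (-1) * y 0)) *
          ((1 - (2 * (s : ℝ) + 2) * (x (-2) * y (-1))) /
            (1 - (2 * (s : ℝ) + 2) * (x 0 * y (-1)))) := by
  obtain ⟨u, hu⟩ : ∃ u : ℤ → ℝ, ∀ m, u m = x (m-1) * y m := ⟨_, fun _ => rfl⟩
  obtain ⟨v, hv⟩ : ∃ v : ℤ → ℝ, ∀ m, v m = y (m-1) * x m := ⟨_, fun _ => rfl⟩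
  have h1u : ∀ m : ℤ, -1 ≤ m → 1 - u m ≠ 0 := by
    intro m hm
    have h := hdx (m+1) (by omega)
    rw [show (m+1-2 : ℤ) = m-1 by ring, show (m+1-1 : ℤ) = m by ring] at h
    rw [hu m]
    exact right_ne_zero_of_mul h
  have h1v : ∀ m : ℤ, -1 ≤ m → 1 - v m ≠ 0 := by
    intro m hm
    have h := hdy (m+1) (by omega)
    rw [show (m+1-2 : ℤ) = m-1 by ring, show (m+1-1 : ℤ) = m by ring] at h
    rw [hv m]
    exact right_ne_zero_of_mul h
  have hur : ∀ m : ℤ, -1 ≤ m → u (m+2) = v m / (1 - v m) := by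
    intro m hm
    have h := hrecy (m+1) (by omega)
    rw [show (m+1-2 : ℤ) = m-1 by ring, show (m+1-1 : ℤ) = m by ring,
      show (m+1+1 : ℤ) = m+2 by ring] at h
    have h1 := h1v m hm
    rw [hv m] at h1
    rw [hu (m+2), hv m, show (m+2-1 : ℤ) = m+1 by ring, h]
    have hx1 : x (m+1) ≠ 0 := hx (m+1) (by omega)
    field_simp
  have hvr : ∀ m : ℤ, -1 ≤ m → v (m+2) = u m / (1 - u m) := by
    intro m hm
    have h := hrecx (m+1) (by omega)
    rw [show (m+1-2 : ℤ) = m-1 by ring, show (m+1-1 : ℤ) = m by ring,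
      show (m+1+1 : ℤ) = m+2 by ring] at h
    have h1 := h1u m hm
    rw [hu m] at h1
    rw [hv (m+2), hu m, show (m+2-1 : ℤ) = m+1 by ring, h]
    have hy1 : y (m+1) ≠ 0 := hy (m+1) (by omega)
    field_simp
  have hu1 : u (-1) = x (-2) * y (-1) := by rw [hu]; norm_num
  have hv1 : v (-1) = y (-2) * x (-1) := by rw [hv]; norm_num
  have hu0 : u 0 = x (-1) * y 0 := by rw [hu]; norm_num
  have hv0 : v 0 = y (-1) * x 0 := by rw [hv]; norm_num
  have C := chain_s11 u v (x (-2) * y (-1)) (y (-2) * x (-1)) (x (-1) * y 0) (y (-1) * x 0)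
    hu1 hv1 hu0 hv0 h1u h1v hur hvr
  have hxstep : ∀ k : ℤ, 0 ≤ k → x (k+2) = x k * v (k+2) / u (k+1) := by
    intro k hk
    have h := hrecx (k+1) (by omega)
    rw [show (k+1-2 : ℤ) = k-1 by ring, show (k+1-1 : ℤ) = k by ring,
      show (k+1+1 : ℤ) = k+2 by ring] at h
    have h2 := hvr k (by omega)
    have h1 := h1u k (by omega)
    rw [hu k] at h1
    rw [h2, hu k, hu (k+1), show (k+1-1 : ℤ) = k by ring, h]
    have hxk : x k ≠ 0 := hx k (by omega)
    have hyk : y (k+1) ≠ 0 := hy (k+1) (by omega)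
    field_simp
  have hx0 : x 0 ≠ 0 := hx 0 (by norm_num)
  have hxm1 : x (-1) ≠ 0 := hx (-1) (by norm_num)
  have hxm2 : x (-2) ≠ 0 := hx (-2) (by norm_num)
  have hy0 : y 0 ≠ 0 := hy 0 (by norm_num)
  have hym1 : y (-1) ≠ 0 := hy (-1) (by norm_num)
  have hym2 : y (-2) ≠ 0 := hy (-2) (by norm_num)
  intro n
  induction n with
  | zero => norm_num
  | succ n ih =>
    obtain ⟨-, ⟨hbne, hbu⟩, -, -, ⟨hcne, hcv⟩⟩ := C n
    obtain ⟨⟨⟨hane, hau⟩, -, -, ⟨hdne, hdv⟩⟩, -⟩ := C (n+1)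
    push_cast at hau hane hdv hdne
    rw [show (4*((n:ℤ)+1)-1) = 4*(n:ℤ)+3 by ring] at hau
    rw [show (4*((n:ℤ)+1)) = 4*(n:ℤ)+4 by ring] at hdv
    have e1 : x (4*(n:ℤ)+2) = x (4*(n:ℤ)) * v (4*(n:ℤ)+2) / u (4*(n:ℤ)+1) := by
      have := hxstep (4*(n:ℤ)) (by positivity)
      rwa [show (4*(n:ℤ)+1) = 4*(n:ℤ)+1 by ring] at this
    have e2 : x (4*(n:ℤ)+4) = x (4*(n:ℤ)+2) * v (4*(n:ℤ)+4) / u (4*(n:ℤ)+3) := by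
      have := hxstep (4*(n:ℤ)+2) (by positivity)
      rwa [show (4*(n:ℤ)+2+2) = 4*(n:ℤ)+4 by ring,
        show (4*(n:ℤ)+2+1) = 4*(n:ℤ)+3 by ring] at this
    rw [show (4*((n+1:ℕ):ℤ)) = 4*(n:ℤ)+4 by push_cast; ring, e2, e1, ih,
      Finset.prod_range_succ, hbu, hcv, hau, hdv]
    have hane' : 1 - (2*(n:ℝ)+2) * (x (-2) * y (-1)) ≠ 0 := by
      convert hane using 2; ring
    have hdne' : 1 - (2*(n:ℝ)+2) * (x 0 * y (-1)) ≠ 0 := by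
      rw [show (x 0 * y (-1)) = y (-1) * x 0 by ring]
      convert hdne using 2; ring
    have hbprod : y (-2) * x (-1) ≠ 0 := mul_ne_zero hym2 hxm1
    have haprod : x (-2) * y (-1) ≠ 0 := mul_ne_zero hxm2 hym1
    have hx2n : x (-2) ^ n ≠ 0 := pow_ne_zero _ hxm2
    have hy2n : y (-2) ^ n ≠ 0 := pow_ne_zero _ hym2
    have hx2n1 : x (-2) ^ (n+1) ≠ 0 := pow_ne_zero _ hxm2
    have hy2n1 : y (-2) ^ (n+1) ≠ 0 := pow_ne_zero _ hym2
    have key : x 0 ^ (n + 1) * y 0 ^ n / (x (-2) ^ n * y (-2) ^ n) *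
          (x (-1) * y 0 / (1 - (2 * (n:ℝ) + 1) * (x (-1) * y 0))) /
          (y (-2) * x (-1) / (1 - (2 * (n:ℝ) + 1) * (y (-2) * x (-1)))) *
          (y (-1) * x 0 / (1 - 2 * ((n:ℝ) + 1) * (y (-1) * x 0))) /
          (x (-2) * y (-1) / (1 - 2 * ((n:ℝ) + 1) * (x (-2) * y (-1)))) =
        x 0 ^ (n + 1 + 1) * y 0 ^ (n + 1) / (x (-2) ^ (n + 1) * y (-2) ^ (n + 1)) *
          ((1 - (2 * (n:ℝ) + 1) * (x (-1) * y (-2))) / (1 - (2 * (n:ℝ) + 1) * (x (-1) * y 0)) *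
          ((1 - (2 * (n:ℝ) + 2) * (x (-2) * y (-1))) / (1 - (2 * (n:ℝ) + 2) * (x 0 * y (-1))))) := by
      field_simp
      ring
    linear_combination (∏ s ∈ Finset.range n,
        ((1 - (2 * (s:ℝ) + 1) * (x (-1) * y (-2))) / (1 - (2 * (s:ℝ) + 1) * (x (-1) * y 0)) *
        ((1 - (2 * (s:ℝ) + 2) * (x (-2) * y (-1))) / (1 - (2 * (s:ℝ) + 2) * (x 0 * y (-1)))))) * key
end

section
/- Let $a, b$ be nonzero reals and suppose $x_{-2}, x_{-1}, x_0, y_{-2}, y_{-1}, y_0$ satisfy $x_{-2} = x_0$, $y_{-2} = y_0$, and $x_{-1} y_{-2} = x_{-2} y_{-1} = \frac{1-a}{b}$. Then the solution of the system $x_{n+1} = \frac{x_{n-2} y_{n-1}}{y_n (a + b x_{n-2} y_{n-1})}$, $y_{n+1} = \frac{y_{n-2} x_{n-1}}{x_n (a + b y_{n-2} x_{n-1})}$ is periodic with period two: $x_{n+2} = x_n$ and $y_{n+2} = y_n$ for all $n \ge -2$ (assuming all denominators remain nonzero). -/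
/-- Sufficient conditions for a 2-periodic solution of the system with constant
coefficients `a_n = c_n = a`, `b_n = d_n = b`. -/
theorem stmt12 (a b : ℝ) (ha : a ≠ 0) (hb : b ≠ 0) (x y : ℤ → ℝ)
    (hx : ∀ n : ℤ, -2 ≤ n → x n ≠ 0) (hy : ∀ n : ℤ, -2 ≤ n → y n ≠ 0)
    (hdx : ∀ n : ℤ, 0 ≤ n → y n * (a + b * (x (n - 2) * y (n - 1))) ≠ 0)
    (hdy : ∀ n : ℤ, 0 ≤ n → x n * (a + b * (y (n - 2) * x (n - 1))) ≠ 0)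
    (hrecx : ∀ n : ℤ, 0 ≤ n →
      x (n + 1) = x (n - 2) * y (n - 1) / (y n * (a + b * (x (n - 2) * y (n - 1)))))
    (hrecy : ∀ n : ℤ, 0 ≤ n →
      y (n + 1) = y (n - 2) * x (n - 1) / (x n * (a + b * (y (n - 2) * x (n - 1)))))
    (hx0 : x (-2) = x 0) (hy0 : y (-2) = y 0)
    (h1 : x (-1) * y (-2) = (1 - a) / b) (h2 : x (-2) * y (-1) = (1 - a) / b) :
    ∀ n : ℤ, -2 ≤ n → x (n + 2) = x n ∧ y (n + 2) = y n := by
  set c := (1 - a) / b with hc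
  have keyN : ∀ m : ℕ, x ((m : ℤ) - 2) = x m ∧ y ((m : ℤ) - 2) = y m ∧
      x ((m : ℤ) - 1) * y ((m : ℤ) - 2) = c ∧ x ((m : ℤ) - 2) * y ((m : ℤ) - 1) = c := by
    intro m
    induction m with
    | zero =>
      norm_num
      exact ⟨hx0, hy0, h1, h2⟩
    | succ m ih =>
      set n : ℤ := (m : ℤ) with hndef
      have hn : 0 ≤ n := Int.ofNat_nonneg m
      have hcast : ((m + 1 : ℕ) : ℤ) = n + 1 := by push_cast [hndef]; ring
      rw [hcast]
      obtain ⟨e1, e2, e3, e4⟩ := ih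
      have hden : a + b * (x (n - 2) * y (n - 1)) = 1 := by
        rw [e4, hc]; field_simp; ring
      have hden' : a + b * (y (n - 2) * x (n - 1)) = 1 := by
        rw [mul_comm (y (n - 2)), e3, hc]; field_simp; ring
      have hyn2 : y (n - 2) ≠ 0 := hy _ (by linarith)
      have hxn2 : x (n - 2) ≠ 0 := hx _ (by linarith)
      have hx1 : x (n + 1) = x (n - 1) := by
        rw [hrecx n hn, hden, mul_one, ← e2,
          show x (n - 2) * y (n - 1) = x (n - 1) * y (n - 2) from e4.trans e3.symm]
        field_simp
      have hy1 : y (n + 1) = y (n - 1) := by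
        rw [hrecy n hn, hden', mul_one, ← e1,
          show y (n - 2) * x (n - 1) = y (n - 1) * x (n - 2) from by
            rw [mul_comm, e3, ← e4]; ring]
        field_simp
      refine ⟨?_, ?_, ?_, ?_⟩ <;>
        simp only [show n + 1 - 2 = n - 1 by ring, show n + 1 - 1 = n by ring]
      · exact hx1.symm
      · exact hy1.symm
      · rw [← e1]; exact e4
      · rw [← e2]; exact e3
  have key : ∀ n : ℤ, 0 ≤ n → x (n - 2) = x n ∧ y (n - 2) = y n ∧
      x (n - 1) * y (n - 2) = c ∧ x (n - 2) * y (n - 1) = c := by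
    intro n hn
    have := keyN n.toNat
    rwa [Int.toNat_of_nonneg hn] at this
  intro n hn
  have h := key (n + 2) (by linarith)
  simp only [show n + 2 - 2 = n by ring, show n + 2 - 1 = n + 1 by ring] at h
  exact ⟨h.1.symm, h.2.1.symm⟩
end

section
/- Let $a, b$ be nonzero reals and suppose $x_0 = -x_{-2}$, $y_0 = -y_{-2}$, and $x_{-1} y_{-2} = -x_{-2} y_{-1} = \frac{1+a}{b}$. Then the solution of the system $x_{n+1} = \frac{x_{n-2} y_{n-1}}{y_n (a + b x_{n-2} y_{n-1})}$, $y_{n+1} = \frac{y_{n-2} x_{n-1}}{x_n (a - b y_{n-2} x_{n-1})}$ is periodic with period four: $x_{n+4} = x_n$ and $y_{n+4} = y_n$ for all $n \ge -2$ (assuming all denominators remain nonzero). -/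
/-- Sufficient conditions for a 4-periodic solution of the system with constant
coefficients `a_n = c_n = a`, `b_n = b`, `d_n = -b`. -/
theorem stmt13 (a b : ℝ) (ha : a ≠ 0) (hb : b ≠ 0) (x y : ℤ → ℝ)
    (hx : ∀ n : ℤ, -2 ≤ n → x n ≠ 0) (hy : ∀ n : ℤ, -2 ≤ n → y n ≠ 0)
    (hdx : ∀ n : ℤ, 0 ≤ n → y n * (a + b * (x (n - 2) * y (n - 1))) ≠ 0)
    (hdy : ∀ n : ℤ, 0 ≤ n → x n * (a - b * (y (n - 2) * x (n - 1))) ≠ 0)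
    (hrecx : ∀ n : ℤ, 0 ≤ n →
      x (n + 1) = x (n - 2) * y (n - 1) / (y n * (a + b * (x (n - 2) * y (n - 1)))))
    (hrecy : ∀ n : ℤ, 0 ≤ n →
      y (n + 1) = y (n - 2) * x (n - 1) / (x n * (a - b * (y (n - 2) * x (n - 1)))))
    (hx0 : x 0 = -x (-2)) (hy0 : y 0 = -y (-2))
    (h1 : x (-1) * y (-2) = (1 + a) / b) (h2 : -(x (-2) * y (-1)) = (1 + a) / b) :
    ∀ n : ℤ, -2 ≤ n → x (n + 4) = x n ∧ y (n + 4) = y n := by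
  have key0 : ∀ k : ℕ, x ((k : ℤ) - 2 + 2) = -x ((k : ℤ) - 2) ∧ y ((k : ℤ) - 2 + 2) = -y ((k : ℤ) - 2) ∧
      x ((k : ℤ) - 2 + 1) * y ((k : ℤ) - 2) = (1 + a) / b ∧
      x ((k : ℤ) - 2) * y ((k : ℤ) - 2 + 1) = -((1 + a) / b) := by
    intro k
    induction k with
    | zero =>
      refine ⟨?_, ?_, ?_, ?_⟩
      · norm_num [hx0]
      · norm_num [hy0]
      · norm_num [h1]
      · norm_num; linarith
    | succ k ih =>
      set m : ℤ := (k : ℤ) - 2 with hmdef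
      have hm : -2 ≤ m := by simp [hmdef]
      rw [show ((k : ℕ) + 1 : ℕ) = (k : ℕ) + 1 from rfl]
      push_cast
      rw [show (k : ℤ) + 1 - 2 = m + 1 from by rw [hmdef]; ring]
      obtain ⟨hx2, hy2, hxy, hyx⟩ := ih
      have hym : y m ≠ 0 := hy m hm
      have hxm : x m ≠ 0 := hx m hm
      have hxy' : x (m + 1) * y m * b = 1 + a := (eq_div_iff hb).mp hxy
      have hyx' : x m * y (m + 1) * b = -(1 + a) := by
        field_simp at hyx
        linarith
      have hx1 : x (m + 1) = (1 + a) / (b * y m) := by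
        field_simp
        linear_combination hxy'
      have hy1 : y (m + 1) = -((1 + a) / (b * x m)) := by
        field_simp
        linear_combination hyx'
      have e1 := hrecx (m + 2) (by linarith)
      rw [show m + 2 - 2 = m from by ring, show m + 2 - 1 = m + 1 from by ring] at e1
      have e2 := hrecy (m + 2) (by linarith)
      rw [show m + 2 - 2 = m from by ring, show m + 2 - 1 = m + 1 from by ring] at e2
      rw [hyx, hy2] at e1
      rw [mul_comm (y m) (x (m + 1)), hxy, hx2] at e2
      have hx3 : x (m + 2 + 1) = -((1 + a) / (b * y m)) := by
        rw [e1]; field_simp; ring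
      have hy3 : y (m + 2 + 1) = (1 + a) / (b * x m) := by
        rw [e2]; field_simp; ring
      refine ⟨?_, ?_, ?_, ?_⟩
      · rw [show m + 1 + 2 = m + 2 + 1 from by ring, hx3, hx1]
      · rw [show m + 1 + 2 = m + 2 + 1 from by ring, hy3, hy1]; ring
      · rw [show m + 1 + 1 = m + 2 from by ring, hx2]
        linear_combination -hyx
      · rw [show m + 1 + 1 = m + 2 from by ring, hy2]
        linear_combination -hxy
  have key : ∀ n : ℤ, -2 ≤ n →
      x (n + 2) = -x n ∧ y (n + 2) = -y n ∧
      x (n + 1) * y n = (1 + a) / b ∧ x n * y (n + 1) = -((1 + a) / b) := by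
    intro n hn
    have := key0 (n + 2).toNat
    rwa [show ((n + 2).toNat : ℤ) - 2 = n from by omega] at this
  intro n hn
  obtain ⟨ha1, hb1, -, -⟩ := key n hn
  obtain ⟨ha2, hb2, -, -⟩ := key (n + 2) (by linarith)
  rw [show n + 2 + 2 = n + 4 from by ring] at ha2 hb2
  rw [ha2, hb2, ha1, hb1]
  constructor <;> ring
end

section
/- If $x_0 = -x_{-2}$, $y_0 = -y_{-2}$, and the sequences satisfy $x_{n+1} = \frac{x_{n-2} y_{n-1}}{y_n (1 + b x_{n-2} y_{n-1})}$, $y_{n+1} = \frac{y_{n-2} x_{n-1}}{x_n (1 - b y_{n-2} x_{n-1})}$ for a nonzero constant $b$ (the case $a = c = 1$, $d = -b$), then the solution is periodic with period four, without any further condition on $x_{-1} y_{-2}$ (assuming all denominators remain nonzero). -/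
/-- The case `a = c = 1`, `d = -b`: if `x_0 = -x_{-2}` and `y_0 = -y_{-2}` then the
solution is 4-periodic, without any further condition on `x_{-1} y_{-2}`. -/
theorem stmt14 (b : ℝ) (hb : b ≠ 0) (x y : ℤ → ℝ)
    (hx : ∀ n : ℤ, -2 ≤ n → x n ≠ 0) (hy : ∀ n : ℤ, -2 ≤ n → y n ≠ 0)
    (hdx : ∀ n : ℤ, 0 ≤ n → y n * (1 + b * (x (n - 2) * y (n - 1))) ≠ 0)
    (hdy : ∀ n : ℤ, 0 ≤ n → x n * (1 - b * (y (n - 2) * x (n - 1))) ≠ 0)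
    (hrecx : ∀ n : ℤ, 0 ≤ n →
      x (n + 1) = x (n - 2) * y (n - 1) / (y n * (1 + b * (x (n - 2) * y (n - 1)))))
    (hrecy : ∀ n : ℤ, 0 ≤ n →
      y (n + 1) = y (n - 2) * x (n - 1) / (x n * (1 - b * (y (n - 2) * x (n - 1)))))
    (hx0 : x 0 = -x (-2)) (hy0 : y 0 = -y (-2)) :
    ∀ n : ℤ, -2 ≤ n → x (n + 4) = x n ∧ y (n + 4) = y n := by
  have hp : x (-2) ≠ 0 := hx _ (by norm_num)
  have hq : x (-1) ≠ 0 := hx _ (by norm_num)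
  have hs : y (-2) ≠ 0 := hy _ (by norm_num)
  have ht : y (-1) ≠ 0 := hy _ (by norm_num)
  -- multiplied forms of the recurrences at n = 0,1,2,3
  have m0x := (eq_div_iff (hdx 0 le_rfl)).mp (hrecx 0 le_rfl)
  have m0y := (eq_div_iff (hdy 0 le_rfl)).mp (hrecy 0 le_rfl)
  have m1x := (eq_div_iff (hdx 1 (by norm_num))).mp (hrecx 1 (by norm_num))
  have m1y := (eq_div_iff (hdy 1 (by norm_num))).mp (hrecy 1 (by norm_num))
  have m2x := (eq_div_iff (hdx 2 (by norm_num))).mp (hrecx 2 (by norm_num))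
  have m2y := (eq_div_iff (hdy 2 (by norm_num))).mp (hrecy 2 (by norm_num))
  have m3x := (eq_div_iff (hdx 3 (by norm_num))).mp (hrecx 3 (by norm_num))
  have m3y := (eq_div_iff (hdy 3 (by norm_num))).mp (hrecy 3 (by norm_num))
  norm_num at m0x m0y m1x m1y m2x m2y m3x m3y
  rw [hy0] at m0x m1x
  rw [hx0] at m0y m1y
  -- x 2 = x (-2)
  have hx2 : x 2 = x (-2) := by
    have key : x 2 * (x (-1) * y (-2)) = x (-2) * (x (-1) * y (-2)) := by
      linear_combination (-x (-2)) * m1x + (-(x 2)) * m0y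
    exact mul_right_cancel₀ (mul_ne_zero hq hs) key
  -- y 2 = y (-2)
  have hy2 : y 2 = y (-2) := by
    have key : y 2 * (y (-1) * x (-2)) = y (-2) * (y (-1) * x (-2)) := by
      linear_combination (-y (-2)) * m1y + (-(y 2)) * m0x
    exact mul_right_cancel₀ (mul_ne_zero ht hp) key
  rw [hx0, hy2] at m2x
  rw [hy0, hx2] at m2y
  -- x 3 = x (-1)
  have hx3 : x 3 = x (-1) := by
    have key : x 3 * y (-2) = x (-1) * y (-2) := by
      linear_combination (1 - b * (y (-2) * x (-1))) * m2x + (1 - b * (y (-2) * x 3)) * m0y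
    exact mul_right_cancel₀ hs key
  -- y 3 = y (-1)
  have hy3 : y 3 = y (-1) := by
    have key : y 3 * x (-2) = y (-1) * x (-2) := by
      linear_combination (1 + b * (x (-2) * y (-1))) * m2y + (1 + b * (x (-2) * y 3)) * m0x
    exact mul_right_cancel₀ hp key
  rw [hy3, hy2] at m3x
  rw [hx3, hx2] at m3y
  -- x 4 = x 0
  have hx4 : x 4 = x 0 := by
    rw [hx0]
    have key : x 4 * y (-1) = -x (-2) * y (-1) := by
      linear_combination (1 + b * (x (-2) * y (-1))) * m3x + (b * (y (-1) * x 4) - 1) * m0x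
    exact mul_right_cancel₀ ht key
  -- y 4 = y 0
  have hy4 : y 4 = y 0 := by
    rw [hy0]
    have key : y 4 * x (-1) = -y (-2) * x (-1) := by
      linear_combination (1 - b * (y (-2) * x (-1))) * m3y + (-(b * (x (-1) * y 4)) - 1) * m0y
    exact mul_right_cancel₀ hq key
  -- the induction step
  have step : ∀ m : ℤ, 0 ≤ m →
      x (m + 2) = x (m - 2) → y (m + 2) = y (m - 2) →
      x (m + 3) = x (m - 1) → y (m + 3) = y (m - 1) →
      x (m + 4) = x m → y (m + 4) = y m →
      x (m + 5) = x (m + 1) ∧ y (m + 5) = y (m + 1) := by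
    intro m hm a1 a2 a3 a4 a5 a6
    constructor
    · have h1 := hrecx (m + 4) (by omega)
      have h2 := hrecx m hm
      rw [show m + 4 + 1 = m + 5 by ring, show m + 4 - 2 = m + 2 by ring,
        show m + 4 - 1 = m + 3 by ring] at h1
      rw [a1, a4, a6] at h1
      exact h1.trans h2.symm
    · have h1 := hrecy (m + 4) (by omega)
      have h2 := hrecy m hm
      rw [show m + 4 + 1 = m + 5 by ring, show m + 4 - 2 = m + 2 by ring,
        show m + 4 - 1 = m + 3 by ring] at h1
      rw [a2, a3, a5] at h1
      exact h1.trans h2.symm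
  -- main claim, by strong induction
  have main : ∀ k : ℕ, x ((k : ℤ) + 2) = x ((k : ℤ) - 2) ∧ y ((k : ℤ) + 2) = y ((k : ℤ) - 2) := by
    intro k
    induction k using Nat.strong_induction_on with
    | _ k ih =>
      match k, ih with
      | 0, _ => norm_num; exact ⟨hx2, hy2⟩
      | 1, _ => norm_num; exact ⟨hx3, hy3⟩
      | 2, _ => norm_num; exact ⟨hx4, hy4⟩
      | (m + 3), ih =>
        have i1 := ih m (by omega)
        have i2 := ih (m + 1) (by omega)
        have i3 := ih (m + 2) (by omega)
        rw [show ((m + 1 : ℕ) : ℤ) = (m : ℤ) + 1 by push_cast; ring] at i2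
        rw [show ((m + 2 : ℕ) : ℤ) = (m : ℤ) + 2 by push_cast; ring] at i3
        rw [show ((m + 3 : ℕ) : ℤ) = (m : ℤ) + 3 by push_cast; ring]
        rw [show (m : ℤ) + 1 + 2 = (m : ℤ) + 3 by ring, show (m : ℤ) + 1 - 2 = (m : ℤ) - 1 by ring] at i2
        rw [show (m : ℤ) + 2 + 2 = (m : ℤ) + 4 by ring, show (m : ℤ) + 2 - 2 = (m : ℤ) by ring] at i3
        rw [show (m : ℤ) + 3 + 2 = (m : ℤ) + 5 by ring, show (m : ℤ) + 3 - 2 = (m : ℤ) + 1 by ring]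
        exact step (m : ℤ) (by positivity) i1.1 i1.2 i2.1 i2.2 i3.1 i3.2
  intro n hn
  obtain ⟨k, rfl⟩ : ∃ k : ℕ, n = (k : ℤ) - 2 := ⟨(n + 2).toNat, by omega⟩
  rw [show (k : ℤ) - 2 + 4 = (k : ℤ) + 2 by ring]
  exact main k
end
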